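/- Let c ∈ ℝ, m, n ∈ ℕ with N = m + n, and suppose λ ∈ ℂ \ {±2±c} is related to z, w ∈ ℂ\{0} by λ - c = z + 1/z and λ + c = w + 1/w. Then λ is an eigenvalue of the pencil H_{N;c} - λD_{m,n} if and only if β_{m,n}(z,w) = 0, where β_{m,n}(z,w) = (z^{m+1} - z^{-m-1})(w^{n+1} - w^{-n-1}) + (z^m - z^{-m})(w^n - w^{-n}). -/

import Mathlib

open Matrix

noncomputable def Hmat (N : ℕ) (c : ℂ) : Matrix (Fin N) (Fin N) ℂ :=
  fun i j => if (i : ℕ) = (j : ℕ) then c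
    else if (i : ℕ) + 1 = (j : ℕ) ∨ (j : ℕ) + 1 = (i : ℕ) then 1 else 0

noncomputable def Dmat (m n : ℕ) : Matrix (Fin (m + n)) (Fin (m + n)) ℂ :=
  Matrix.diagonal (fun i => if (i : ℕ) < m then 1 else -1)

noncomputable def betaF (m n : ℕ) (z w : ℂ) : ℂ :=
  (z ^ (m + 1) - z ^ (-(m + 1) : ℤ)) * (w ^ (n + 1) - w ^ (-(n + 1) : ℤ)) +
    (z ^ m - z ^ (-(m : ℤ))) * (w ^ n - w ^ (-(n : ℤ)))

/-!
The matrix `H_{N;c} - λ D_{m,n}` is tridiagonal with unit off-diagonals and diagonal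
`d = (-(z + z⁻¹), …, -(z + z⁻¹), w + w⁻¹, …, w + w⁻¹)` (`m`, then `n` entries). Expanding along
the last row, its leading principal minors satisfy `D_{k+2} = d_{k+1} D_{k+1} - D_k`. On a block
of constant diagonal `±(t + t⁻¹)` this recurrence is solved, up to the sign `(±1)^k`, by
`t^k - t^{-k}`; gluing the two blocks at index `m` gives
`det (H_{N;c} - λ D_{m,n}) · (z - z⁻¹)(w - w⁻¹) = (-1)^m β_{m,n}(z, w)`,
and `λ ≠ ±2 ± c` says exactly that `z, w ≠ ±1`, so the factor `(z - z⁻¹)(w - w⁻¹)` is nonzero.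
-/

section Tridiagonal

variable {R : Type*} [CommRing R]

def tridiag (d : ℕ → R) (N : ℕ) : Matrix (Fin N) (Fin N) R :=
  fun i j => if (i : ℕ) = j then d i else if (i : ℕ) + 1 = j ∨ (j : ℕ) + 1 = i then 1 else 0

lemma tridiag_submatrix (d : ℕ → R) {M N : ℕ} {f g : Fin M → Fin N}
    (hf : ∀ i, (f i : ℕ) = i) (hg : ∀ i, (g i : ℕ) = i) :
    (tridiag d N).submatrix f g = tridiag d M := by
  ext i j
  simp only [submatrix_apply, tridiag, hf, hg]

@[simp] lemma det_tridiag_one (d : ℕ → R) : (tridiag d 1).det = d 0 := by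
  simp [tridiag]

lemma det_tridiag_submatrix_castSucc_succAbove (d : ℕ → R) (N : ℕ) :
    ((tridiag d (N + 2)).submatrix Fin.castSucc (Fin.last N).castSucc.succAbove).det =
      (tridiag d N).det := by
  have hminor : (tridiag d (N + 2)).submatrix (Fin.castSucc ∘ Fin.castSucc)
      ((Fin.last N).castSucc.succAbove ∘ Fin.castSucc) = tridiag d N :=
    tridiag_submatrix d (fun i => rfl) (fun i => by
      simp [Fin.succAbove_castSucc_of_lt _ _ (Fin.castSucc_lt_last i)])
  -- the last column of this minor is the unit vector at row `N`
  rw [det_succ_column _ (Fin.last N), Fintype.sum_eq_single (Fin.last N)]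
  · simp [hminor, tridiag, ← two_mul]
  · intro i hi
    have hiN : (i : ℕ) < N := Fin.val_lt_last hi
    simp only [submatrix_apply, tridiag, Fin.succAbove_castSucc_self, Fin.val_castSucc,
      Fin.val_succ, Fin.val_last]
    split_ifs <;> first | omega | simp

lemma det_tridiag_add_two (d : ℕ → R) (N : ℕ) :
    (tridiag d (N + 2)).det = d (N + 1) * (tridiag d (N + 1)).det - (tridiag d N).det := by
  have hminor : (tridiag d (N + 2)).submatrix Fin.castSucc Fin.castSucc = tridiag d (N + 1) :=
    tridiag_submatrix d (fun i => rfl) (fun i => rfl)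
  rw [det_succ_row _ (Fin.last (N + 1)),
    Fintype.sum_eq_add (Fin.last N).castSucc (Fin.last (N + 1)) (Fin.castSucc_lt_last _).ne]
  · simp [det_tridiag_submatrix_castSucc_succAbove, hminor, tridiag, sub_eq_neg_add]
  · rintro j ⟨hj₁, hj₂⟩
    have hj : (j : ℕ) < N := by
      have := j.isLt
      simp only [ne_eq, Fin.ext_iff, Fin.val_castSucc, Fin.val_last] at hj₁ hj₂
      omega
    simp only [tridiag, Fin.val_last]
    split_ifs <;> first | omega | simp

end Tridiagonal

section PowSubInv

variable {K : Type*} [Field K]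

def powSubInv (z : K) (k : ℕ) : K := z ^ k - z⁻¹ ^ k

@[simp] lemma powSubInv_zero (z : K) : powSubInv z 0 = 0 := by simp [powSubInv]

lemma powSubInv_add_two {z : K} (hz : z ≠ 0) (k : ℕ) :
    powSubInv z (k + 2) = (z + z⁻¹) * powSubInv z (k + 1) - powSubInv z k := by
  simp only [powSubInv]
  linear_combination (z⁻¹ ^ k - z ^ k) * mul_inv_cancel₀ hz

lemma powSubInv_one_ne_zero {z : K} (hz : z ≠ 0) (h1 : z ≠ 1) (h2 : z ≠ -1) :
    powSubInv z 1 ≠ 0 := by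
  intro h
  have hzz : z * z = 1 := by
    rw [powSubInv, pow_one, pow_one, sub_eq_zero] at h
    nth_rewrite 2 [h]
    exact mul_inv_cancel₀ hz
  exact (mul_self_eq_one_iff.1 hzz).elim h1 h2

end PowSubInv

section TwoBlocks

variable {K : Type*} [Field K] {d : ℕ → K} {z w : K} {m : ℕ}

lemma det_tridiag_mul_powSubInv_one (hz : z ≠ 0) (hA : ∀ i < m, d i = -(z + z⁻¹)) {k : ℕ}
    (hk : k ≤ m) : (tridiag d k).det * powSubInv z 1 = (-1) ^ k * powSubInv z (k + 1) := by
  induction k using Nat.twoStepInduction with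
  | zero => simp
  | one =>
    rw [det_tridiag_one, hA 0 hk, powSubInv_add_two hz 0, powSubInv_zero]
    ring
  | more k ih ih1 =>
    rw [det_tridiag_add_two, hA (k + 1) (by omega)]
    linear_combination (-(z + z⁻¹)) * ih1 (by omega) - ih (by omega) -
      (-1) ^ k * powSubInv_add_two hz (k + 1)

lemma det_tridiag_succ_mul_powSubInv_one (hz : z ≠ 0) (hA : ∀ i < m, d i = -(z + z⁻¹))
    (hB : d m = w + w⁻¹) :
    (tridiag d (m + 1)).det * powSubInv z 1 =
      (-1) ^ m * ((w + w⁻¹) * powSubInv z (m + 1) + powSubInv z m) := by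
  rcases m with _ | m
  · rw [det_tridiag_one, hB, powSubInv_zero]
    ring
  · rw [det_tridiag_add_two, hB]
    linear_combination (w + w⁻¹) * det_tridiag_mul_powSubInv_one hz hA le_rfl -
      det_tridiag_mul_powSubInv_one hz hA (Nat.le_succ m)

lemma det_tridiag_add_mul_powSubInv_one_mul (hz : z ≠ 0) (hw : w ≠ 0)
    (hA : ∀ i < m, d i = -(z + z⁻¹)) (hB : ∀ i ≥ m, d i = w + w⁻¹) (k : ℕ) :
    (tridiag d (m + k)).det * powSubInv z 1 * powSubInv w 1 =
      (-1) ^ m * (powSubInv z (m + 1) * powSubInv w (k + 1) + powSubInv z m * powSubInv w k) := by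
  induction k using Nat.twoStepInduction with
  | zero =>
    linear_combination powSubInv w 1 * det_tridiag_mul_powSubInv_one hz hA le_rfl -
      (-1) ^ m * powSubInv z m * powSubInv_zero w
  | one =>
    linear_combination powSubInv w 1 * det_tridiag_succ_mul_powSubInv_one hz hA (hB m le_rfl) -
      (-1) ^ m * powSubInv z (m + 1) * (powSubInv_add_two hw 0 - powSubInv_zero w)
  | more k ih ih1 =>
    rw [← add_assoc, det_tridiag_add_two, hB _ (by omega)]
    linear_combination (w + w⁻¹) * ih1 - ih - (-1) ^ m * (powSubInv z (m + 1) *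
      powSubInv_add_two hw (k + 1) + powSubInv z m * powSubInv_add_two hw k)

end TwoBlocks

lemma Hmat_sub_smul_Dmat (m n : ℕ) (c lam : ℂ) :
    Hmat (m + n) c - lam • Dmat m n =
      tridiag (fun i => if i < m then c - lam else c + lam) (m + n) := by
  ext i j
  simp only [Matrix.sub_apply, Matrix.smul_apply, Hmat, Dmat, tridiag, diagonal_apply, Fin.ext_iff,
    smul_eq_mul]
  split_ifs <;> ring

lemma betaF_eq_powSubInv (m n : ℕ) (z w : ℂ) :
    betaF m n z w = powSubInv z (m + 1) * powSubInv w (n + 1) + powSubInv z m * powSubInv w n := by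
  have hneg (x : ℂ) (k : ℕ) : x ^ (-(k : ℤ)) = x⁻¹ ^ k := by
    rw [_root_.zpow_neg, zpow_natCast, inv_pow]
  have hneg_succ (x : ℂ) (k : ℕ) : x ^ (-(k + 1 : ℤ)) = x⁻¹ ^ (k + 1) := by
    exact_mod_cast hneg x (k + 1)
  simp only [betaF, powSubInv, hneg, hneg_succ]

theorem pencil_eigenvalue_iff_beta (c : ℝ) (m n : ℕ) (lam z w : ℂ)
    (hz : z ≠ 0) (hw : w ≠ 0)
    (h1 : lam ≠ 2 + c) (h2 : lam ≠ 2 - c) (h3 : lam ≠ -2 + c) (h4 : lam ≠ -2 - c)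
    (hzl : lam - c = z + 1 / z) (hwl : lam + c = w + 1 / w) :
    ¬ IsUnit (Hmat (m + n) (c : ℂ) - lam • Dmat m n) ↔ betaF m n z w = 0 := by
  rw [one_div] at hzl hwl
  have hFz : powSubInv z 1 ≠ 0 := powSubInv_one_ne_zero hz
    (by rintro rfl; apply h1; norm_num at hzl; linear_combination hzl)
    (by rintro rfl; apply h3; norm_num at hzl; linear_combination hzl)
  have hFw : powSubInv w 1 ≠ 0 := powSubInv_one_ne_zero hw
    (by rintro rfl; apply h2; norm_num at hwl; linear_combination hwl)
    (by rintro rfl; apply h4; norm_num at hwl; linear_combination hwl)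
  have hdet := det_tridiag_add_mul_powSubInv_one_mul
    (m := m) (d := fun i => if i < m then (c : ℂ) - lam else c + lam) hz hw
    (fun i hi => by simp only [if_pos hi]; linear_combination -hzl)
    (fun i hi => by simp only [if_neg (not_lt.2 hi)]; linear_combination hwl) n
  rw [isUnit_iff_isUnit_det, isUnit_iff_ne_zero, not_not, Hmat_sub_smul_Dmat, betaF_eq_powSubInv,
    ← mul_eq_zero_iff_right hFz, ← mul_eq_zero_iff_right hFw, hdet]
  simp
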